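/- Let n = p + q ≥ 3 and let γ¹,…,γⁿ ∈ M_N(ℂ) satisfy γⁱγ^j + γ^jγⁱ = 2 η^{ij} I. Let D = Σᵢ γⁱ ∂ᵢ be the flat Dirac operator acting on smooth maps ψ : ℝⁿ → ℂ^N. Then for every conformal Killing vector field X of the flat metric η on ℝⁿ and every smooth ψ, D(L^{(n−1)/(2n)}_X ψ) = L^{(n+1)/(2n)}_X (Dψ); i.e., the Dirac operator is a conformally invariant operator from spinor fields of weight (n−1)/(2n) to spinor fields of weight (n+1)/(2n). -/

import Mathlib

open Matrix BigOperators

noncomputable section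

/-- The partial derivative `∂_j f (x)` of a function on `ℝⁿ`. -/
def pd {n : ℕ} (f : (Fin n → ℝ) → ℝ) (j : Fin n) (x : Fin n → ℝ) : ℝ :=
  fderiv ℝ f x (Pi.single j 1)

/-- Entries of the flat diagonal metric `η = diag(1,…,1,−1,…,−1)` with `p` entries `+1`. -/
def etaSign (p : ℕ) {n : ℕ} (i : Fin n) : ℝ := if (i : ℕ) < p then 1 else -1

/-- The divergence `Σ_k ∂_k X^k` of a vector field on `ℝⁿ`. -/
def divg {n : ℕ} (X : (Fin n → ℝ) → Fin n → ℝ) (x : Fin n → ℝ) : ℝ :=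
  ∑ k, pd (fun y => X y k) k x

/-- `X` is a conformal Killing vector field for the flat metric of signature `(p, n−p)`:
`∂ᵢX_j + ∂_jXᵢ = (2/n)(Σ_k ∂_k X^k) η_{ij}` where `X_j = η_{jj} X^j`. -/
def ConformalKilling (p : ℕ) {n : ℕ} (X : (Fin n → ℝ) → Fin n → ℝ) : Prop :=
  ∀ (x : Fin n → ℝ) (i j : Fin n),
    etaSign p j * pd (fun y => X y j) i x + etaSign p i * pd (fun y => X y i) j x
      = (2 / (n : ℝ)) * divg X x * (if i = j then etaSign p i else 0)

/-- The Lie bracket of vector fields `[X,Y]ⁱ = Σ_j (X^j ∂_j Yⁱ − Y^j ∂_j Xⁱ)`. -/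
def lieBracketVF {n : ℕ} (X Y : (Fin n → ℝ) → Fin n → ℝ) : (Fin n → ℝ) → Fin n → ℝ :=
  fun x i => ∑ j, (X x j * pd (fun y => Y y i) j x - Y x j * pd (fun y => X y i) j x)

/-- The matrix entries `η^{ij} = η_{ij}` of the flat diagonal metric of signature `(p, n−p)`. -/
def etaUp (p : ℕ) {n : ℕ} (i j : Fin n) : ℝ := if i = j then etaSign p i else 0

/-- The partial derivative `∂_i ψ (x)` of a spinor field `ψ : ℝⁿ → ℂ^N`. -/
def pdV {n N : ℕ} (ψ : (Fin n → ℝ) → Fin N → ℂ) (i : Fin n) (x : Fin n → ℝ) : Fin N → ℂ :=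
  fderiv ℝ ψ x (Pi.single i 1)

/-- The weighted Kosmann Lie derivative of a spinor field along a vector field `X`:
`L^λ_X ψ = Σᵢ Xⁱ ∂ᵢψ + (1/4) Σ_{i,j} ∂_{[i}X_{j]} γⁱγ^j ψ + λ (Σ_k ∂_k X^k) ψ`, where
`∂_{[i}X_{j]} = (1/2)(∂ᵢX_j − ∂_jXᵢ)` and `X_j = η_{jj} X^j`. -/
def kosmann (p : ℕ) {n N : ℕ} (γ : Fin n → Matrix (Fin N) (Fin N) ℂ) (lam : ℝ)
    (X : (Fin n → ℝ) → Fin n → ℝ) (ψ : (Fin n → ℝ) → Fin N → ℂ) :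
    (Fin n → ℝ) → Fin N → ℂ :=
  fun x =>
    (∑ i, X x i • pdV ψ i x)
    + (1 / 4 : ℝ) • ∑ i, ∑ j,
        ((1 / 2 : ℝ) * (etaSign p j * pd (fun y => X y j) i x
                        - etaSign p i * pd (fun y => X y i) j x))
          • (γ i * γ j).mulVec (ψ x)
    + (lam * divg X x) • ψ x

/-- The flat Dirac operator `D = Σᵢ γⁱ ∂ᵢ` on spinor fields `ψ : ℝⁿ → ℂ^N`. -/
def dirac {n N : ℕ} (γ : Fin n → Matrix (Fin N) (Fin N) ℂ)
    (ψ : (Fin n → ℝ) → Fin N → ℂ) : (Fin n → ℝ) → Fin N → ℂ :=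
  fun x => ∑ i, (γ i).mulVec (pdV ψ i x)

/-!
Write `L^λ_X ψ = Xⁱ ∂ᵢψ + Ω ψ + λ (div X) ψ` with `Ω = ¼ ∂_{[i}X_{j]} γⁱγʲ`. Commuting `D` past
`L^λ_X` (for any `C²` field `X`) leaves a first-order term `Σᵢ (∂ₖXⁱ γᵏ - [Ω, γⁱ]) ∂ᵢψ` and a
zeroth-order term `(γᵏ ∂ₖΩ + λ ∂ₖ(div X) γᵏ) ψ`.

For a conformal Killing field `∂ₖXⁱ = ηⁱⁱ ∂_{[k}X_{i]} + (div X / n) δₖⁱ`, while the Clifford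
relations give `[Ω, γⁱ] = ηⁱⁱ ∂_{[k}X_{i]} γᵏ`; so the first-order term is `(div X / n) Dψ`, which
raises the weight by `1/n`. Differentiating the conformal Killing equation and using the symmetry
of second derivatives gives `∂ₖ∂_{[i}X_{j]} = (∂ᵢ(div X) η_{kj} - ∂ⱼ(div X) η_{ki}) / n`; contracted
with the Clifford matrices, the zeroth-order term becomes `((1 - n)/(2n) + λ) ∂ₖ(div X) γᵏ ψ`,
which vanishes exactly for `λ = (n - 1)/(2n)`.
-/

section Calculus

variable {E F : Type*} [NormedAddCommGroup E] [NormedSpace ℝ E]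
  [NormedAddCommGroup F] [NormedSpace ℝ F]

theorem differentiable_fderiv_apply {f : E → F} (hf : ContDiff ℝ 2 f) (v : E) :
    Differentiable ℝ fun x => fderiv ℝ f x v :=
  ((hf.fderiv_right (m := 1) le_rfl).clm_apply contDiff_const).differentiable one_ne_zero

theorem fderiv_fderiv_apply_comm {f : E → F} (hf : ContDiff ℝ 2 f) (x v w : E) :
    fderiv ℝ (fun y => fderiv ℝ f y v) x w = fderiv ℝ (fun y => fderiv ℝ f y w) x v := by
  have hd : DifferentiableAt ℝ (fderiv ℝ f) x :=
    (hf.fderiv_right (m := 1) le_rfl).differentiable one_ne_zero x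
  rw [fderiv_clm_apply hd (differentiableAt_const v),
    fderiv_clm_apply hd (differentiableAt_const w)]
  simpa using hf.contDiffAt.isSymmSndFDerivAt (by simp [minSmoothness_of_isRCLikeNormedField]) w v

end Calculus

section PartialDerivatives

variable {n N : ℕ} {x : Fin n → ℝ} {k : Fin n}

theorem pd_comm {f : (Fin n → ℝ) → ℝ} (hf : ContDiff ℝ 2 f) (i j : Fin n) (x : Fin n → ℝ) :
    pd (pd f i) j x = pd (pd f j) i x :=
  fderiv_fderiv_apply_comm hf x _ _

theorem pdV_comm {ψ : (Fin n → ℝ) → Fin N → ℂ} (hψ : ContDiff ℝ 2 ψ) (i j : Fin n)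
    (x : Fin n → ℝ) : pdV (pdV ψ i) j x = pdV (pdV ψ j) i x :=
  fderiv_fderiv_apply_comm hψ x _ _

theorem pd_add {f g : (Fin n → ℝ) → ℝ} (hf : DifferentiableAt ℝ f x)
    (hg : DifferentiableAt ℝ g x) : pd (fun y => f y + g y) k x = pd f k x + pd g k x := by
  simp [pd, fderiv_fun_add hf hg]

theorem pd_sub {f g : (Fin n → ℝ) → ℝ} (hf : DifferentiableAt ℝ f x)
    (hg : DifferentiableAt ℝ g x) : pd (fun y => f y - g y) k x = pd f k x - pd g k x := by
  simp [pd, fderiv_fun_sub hf hg]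

theorem pd_const_mul (c : ℝ) {f : (Fin n → ℝ) → ℝ} (hf : DifferentiableAt ℝ f x) :
    pd (fun y => c * f y) k x = c * pd f k x := by
  simp [pd, fderiv_const_mul hf c]

theorem pdV_add {ψ φ : (Fin n → ℝ) → Fin N → ℂ} (hψ : DifferentiableAt ℝ ψ x)
    (hφ : DifferentiableAt ℝ φ x) : pdV (fun y => ψ y + φ y) k x = pdV ψ k x + pdV φ k x := by
  simp [pdV, fderiv_fun_add hψ hφ]

theorem pdV_sum {ι : Type*} (s : Finset ι) {ψ : ι → (Fin n → ℝ) → Fin N → ℂ}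
    (hψ : ∀ i ∈ s, DifferentiableAt ℝ (ψ i) x) :
    pdV (fun y => ∑ i ∈ s, ψ i y) k x = ∑ i ∈ s, pdV (ψ i) k x := by
  simp [pdV, fderiv_fun_sum hψ]

theorem pdV_const_smul (c : ℝ) {ψ : (Fin n → ℝ) → Fin N → ℂ} (hψ : DifferentiableAt ℝ ψ x) :
    pdV (fun y => c • ψ y) k x = c • pdV ψ k x := by
  simp [pdV, fderiv_fun_const_smul hψ c]

theorem pdV_smul {f : (Fin n → ℝ) → ℝ} {ψ : (Fin n → ℝ) → Fin N → ℂ}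
    (hf : DifferentiableAt ℝ f x) (hψ : DifferentiableAt ℝ ψ x) :
    pdV (fun y => f y • ψ y) k x = pd f k x • ψ x + f x • pdV ψ k x := by
  simp [pdV, pd, fderiv_fun_smul hf hψ, add_comm]

theorem hasFDerivAt_mulVec (M : Matrix (Fin N) (Fin N) ℂ) {ψ : (Fin n → ℝ) → Fin N → ℂ}
    {ψ' : (Fin n → ℝ) →L[ℝ] Fin N → ℂ} (hψ : HasFDerivAt ψ ψ' x) :
    HasFDerivAt (fun y => M *ᵥ ψ y)
      ((M.mulVecLin.toContinuousLinearMap.restrictScalars ℝ).comp ψ') x :=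
  (M.mulVecLin.toContinuousLinearMap.restrictScalars ℝ).hasFDerivAt.comp x hψ

theorem pdV_mulVec (M : Matrix (Fin N) (Fin N) ℂ) {ψ : (Fin n → ℝ) → Fin N → ℂ}
    (hψ : DifferentiableAt ℝ ψ x) : pdV (fun y => M *ᵥ ψ y) k x = M *ᵥ pdV ψ k x :=
  congrArg (· (Pi.single k 1)) (hasFDerivAt_mulVec M hψ.hasFDerivAt).fderiv

theorem differentiable_pd {f : (Fin n → ℝ) → ℝ} (hf : ContDiff ℝ 2 f) (j : Fin n) :
    Differentiable ℝ (pd f j) :=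
  differentiable_fderiv_apply hf _

theorem differentiable_pdV {ψ : (Fin n → ℝ) → Fin N → ℂ} (hψ : ContDiff ℝ 2 ψ) (j : Fin n) :
    Differentiable ℝ (pdV ψ j) :=
  differentiable_fderiv_apply hψ _

end PartialDerivatives

section Clifford

variable {p n : ℕ}

theorem etaUp_self (i : Fin n) : etaUp p i i = etaSign p i := if_pos rfl

theorem etaSign_mul_self (i : Fin n) : etaSign p i * etaSign p i = 1 := by
  unfold etaSign; split <;> norm_num

theorem etaUp_comm (i j : Fin n) : etaUp p i j = etaUp p j i := by
  unfold etaUp; split_ifs with h h' h' <;> simp_all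

theorem etaSign_mul_etaUp (i j : Fin n) :
    etaSign p i * etaUp p i j = if i = j then 1 else 0 := by
  unfold etaUp; split_ifs <;> simp [etaSign_mul_self]

theorem sum_mul_etaUp_smul {M : Type*} [AddCommMonoid M] [Module ℝ M] (c : ℝ) (k : Fin n)
    (f : Fin n → M) : ∑ j, (c * etaUp p k j) • f j = (c * etaSign p k) • f k := by
  simp [etaUp, ite_smul]

variable {A : Type*} [Ring A] [Algebra ℝ A]

def IsCliffordFamily (p : ℕ) (γ : Fin n → A) : Prop :=
  ∀ i j, γ i * γ j + γ j * γ i = (2 * etaUp p i j) • (1 : A)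

def cliffordBivector (γ : Fin n → A) (B : Fin n → Fin n → ℝ) : A :=
  (1 / 4 : ℝ) • ∑ i, ∑ j, B i j • (γ i * γ j)

theorem cliffordBivector_const_mul (γ : Fin n → A) (c : ℝ) (B : Fin n → Fin n → ℝ) :
    cliffordBivector γ (fun i j => c * B i j) = c • cliffordBivector γ B := by
  simp only [cliffordBivector, Finset.smul_sum, smul_smul]
  congr! 3
  ring

namespace IsCliffordFamily

variable {γ : Fin n → A} (hγ : IsCliffordFamily p γ)
include hγ

theorem mul_self (i : Fin n) : γ i * γ i = etaSign p i • (1 : A) := by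
  have h := hγ i i
  rw [etaUp_self, ← two_smul ℝ, mul_smul] at h
  exact smul_right_injective A two_ne_zero h

theorem mul_swap (i j : Fin n) : γ i * γ j = (2 * etaUp p i j) • (1 : A) - γ j * γ i :=
  eq_sub_of_add_eq (hγ i j)

theorem mul_mul_mul_self (i j : Fin n) :
    γ j * γ i * γ j = (2 * etaUp p j i) • γ j - etaSign p j • γ i := by
  rw [hγ.mul_swap, sub_mul, mul_assoc, hγ.mul_self, smul_mul_assoc, one_mul, mul_smul_comm,
    mul_one]

theorem mul_mul_mul_sub_mul_mul (i j m : Fin n) :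
    γ i * γ j * γ m - γ m * (γ i * γ j) = (2 * etaUp p j m) • γ i - (2 * etaUp p i m) • γ j := by
  rw [mul_assoc, hγ.mul_swap j m, mul_sub, ← mul_assoc (γ i), hγ.mul_swap i m]
  simp only [sub_mul, mul_smul_comm, smul_mul_assoc, mul_one, one_mul, mul_assoc]
  abel

theorem sum_smul_mul_mul_self (i : Fin n) :
    ∑ j, etaSign p j • (γ j * γ i * γ j) = (2 - n : ℝ) • γ i := by
  simp only [hγ.mul_mul_mul_self, smul_sub, smul_smul, etaSign_mul_self, one_smul,
    Finset.sum_sub_distrib, Finset.sum_const, Finset.card_univ, Fintype.card_fin]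
  simp only [mul_left_comm (etaSign p _), etaSign_mul_etaUp, mul_ite, mul_one, mul_zero,
    ite_smul, zero_smul, Finset.sum_ite_eq', Finset.mem_univ, if_true]
  rw [sub_smul, ← Nat.cast_smul_eq_nsmul ℝ]

theorem cliffordBivector_mul_sub_mul {B : Fin n → Fin n → ℝ} (hB : ∀ i j, B j i = -B i j)
    (m : Fin n) :
    cliffordBivector γ B * γ m - γ m * cliffordBivector γ B = etaSign p m • ∑ k, B k m • γ k := by
  simp only [cliffordBivector, smul_mul_assoc, mul_smul_comm, Finset.sum_mul, Finset.mul_sum,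
    ← smul_sub, ← Finset.sum_sub_distrib]
  simp only [hγ.mul_mul_mul_sub_mul_mul, smul_sub, smul_smul, Finset.sum_sub_distrib]
  rw [Finset.sum_comm (γ := Fin n) (f := fun i j => (B i j * (2 * etaUp p i m)) • γ j)]
  simp only [← Finset.sum_smul, etaUp, mul_ite, mul_zero, Finset.sum_ite_eq', Finset.mem_univ,
    if_true, Finset.smul_sum, ← Finset.sum_sub_distrib, hB m]
  refine Finset.sum_congr rfl fun k _ => ?_
  module

theorem sum_mul_cliffordBivector (d : Fin n → ℝ) :
    ∑ k, γ k * cliffordBivector γ (fun i j => d i * etaUp p k j - d j * etaUp p k i)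
      = ((1 - n) / 2 : ℝ) • ∑ k, d k • γ k := by
  have first : ∑ k, ∑ i, ∑ j, (d i * etaUp p k j) • (γ k * (γ i * γ j))
      = (2 - n : ℝ) • ∑ i, d i • γ i := by
    simp only [sum_mul_etaUp_smul]
    rw [Finset.sum_comm, Finset.smul_sum]
    refine Finset.sum_congr rfl fun i _ => ?_
    rw [smul_comm, ← hγ.sum_smul_mul_mul_self, Finset.smul_sum]
    exact Finset.sum_congr rfl fun k _ => by rw [mul_smul, mul_assoc]
  have second : ∑ k, ∑ i, ∑ j, (d j * etaUp p k i) • (γ k * (γ i * γ j))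
      = (n : ℝ) • ∑ j, d j • γ j := by
    rw [Finset.sum_congr rfl fun k _ => Finset.sum_comm]
    simp only [sum_mul_etaUp_smul, ← mul_assoc, hγ.mul_self, smul_mul_assoc, one_mul, smul_smul,
      mul_assoc (d _), etaSign_mul_self, mul_one, Finset.sum_const, Finset.card_univ,
      Fintype.card_fin, Nat.cast_smul_eq_nsmul]
  have expand : ∑ k, γ k * cliffordBivector γ (fun i j => d i * etaUp p k j - d j * etaUp p k i)
      = (1 / 4 : ℝ) • (∑ k, ∑ i, ∑ j, (d i * etaUp p k j) • (γ k * (γ i * γ j))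
        - ∑ k, ∑ i, ∑ j, (d j * etaUp p k i) • (γ k * (γ i * γ j))) := by
    simp only [cliffordBivector, mul_smul_comm, sub_smul, Finset.sum_sub_distrib, mul_sub,
      Finset.mul_sum, smul_sub, Finset.smul_sum]
  rw [expand, first, second, ← sub_smul, smul_smul]
  congr 1
  ring

end IsCliffordFamily

end Clifford

section ConformalKilling

variable {p n : ℕ} {X : (Fin n → ℝ) → Fin n → ℝ}

theorem differentiable_divg (hX : ContDiff ℝ 2 X) : Differentiable ℝ (divg X) :=
  Differentiable.fun_sum fun k _ => differentiable_pd (contDiff_pi.mp hX k) k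

/-- `∂_{[i}X_{j]}` at `x`, with the index of `X` lowered by `η`. -/
def skewDeriv (p : ℕ) (X : (Fin n → ℝ) → Fin n → ℝ) (x : Fin n → ℝ) (i j : Fin n) : ℝ :=
  (1 / 2) * (etaSign p j * pd (fun y => X y j) i x - etaSign p i * pd (fun y => X y i) j x)

theorem skewDeriv_swap (x : Fin n → ℝ) (i j : Fin n) :
    skewDeriv p X x j i = -skewDeriv p X x i j := by
  unfold skewDeriv; ring

theorem differentiable_skewDeriv (hX : ContDiff ℝ 2 X) (i j : Fin n) :
    Differentiable ℝ fun y => skewDeriv p X y i j := by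
  have h := fun m a => differentiable_pd (contDiff_pi.mp hX m) a
  unfold skewDeriv
  fun_prop

namespace ConformalKilling

variable (hX : ConformalKilling p X)
include hX

theorem pd_eq_skewDeriv_add (x : Fin n → ℝ) (k i : Fin n) :
    pd (fun y => X y i) k x
      = etaSign p i * skewDeriv p X x k i + if k = i then divg X x / n else 0 := by
  have h := hX x k i
  have hsi := etaSign_mul_self (p := p) i
  unfold skewDeriv
  split_ifs at h ⊢ with hki
  · subst hki
    linear_combination (etaSign p k / 2) * h + (divg X x / n - pd (fun y => X y k) k x) * hsi
  · linear_combination (etaSign p i / 2) * h - pd (fun y => X y i) k x * hsi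

theorem pd_pd_add_pd_pd (hX2 : ContDiff ℝ 2 X) (x : Fin n → ℝ) (a b c : Fin n) :
    etaSign p c * pd (pd (fun y => X y c) b) a x + etaSign p b * pd (pd (fun y => X y b) c) a x
      = 2 / n * etaUp p b c * pd (divg X) a x := by
  have hd := fun m a => (differentiable_pd (contDiff_pi.mp hX2 m) a x)
  have hCK : (fun y => etaSign p c * pd (fun z => X z c) b y
      + etaSign p b * pd (fun z => X z b) c y) = fun y => 2 / n * etaUp p b c * divg X y := by
    funext y
    rw [hX y b c, etaUp]
    ring
  have := congrArg (pd · a x) hCK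
  rwa [pd_add ((hd c b).const_mul _) ((hd b c).const_mul _), pd_const_mul _ (hd c b),
    pd_const_mul _ (hd b c), pd_const_mul _ (differentiable_divg hX2 x)] at this

theorem pd_skewDeriv (hX2 : ContDiff ℝ 2 X) (x : Fin n → ℝ) (k i j : Fin n) :
    pd (fun y => skewDeriv p X y i j) k x
      = (n : ℝ)⁻¹ * (pd (divg X) i x * etaUp p k j - pd (divg X) j x * etaUp p k i) := by
  have hd := fun m a => (differentiable_pd (contDiff_pi.mp hX2 m) a x)
  have hT := fun m a b => pd_comm (contDiff_pi.mp hX2 m) a b x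
  unfold skewDeriv
  rw [pd_const_mul _ (((hd j i).const_mul _).fun_sub ((hd i j).const_mul _)),
    pd_sub ((hd j i).const_mul _) ((hd i j).const_mul _), pd_const_mul _ (hd j i),
    pd_const_mul _ (hd i j)]
  -- the usual three-term cyclic combination of the differentiated equation, in which the
  -- symmetric second derivatives of `X` cancel
  linear_combination (1 / 2) * hX.pd_pd_add_pd_pd hX2 x i k j
    - (1 / 2) * hX.pd_pd_add_pd_pd hX2 x j i k
    + (etaSign p j / 2) * hT j i k - (etaSign p i / 2) * hT i j k
    - (etaSign p k / 2) * hT k j i + ((n : ℝ)⁻¹ * pd (divg X) j x) * etaUp_comm (p := p) k i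

variable {A : Type*} [Ring A] [Algebra ℝ A] {γ : Fin n → A}

theorem sum_pd_smul_sub_commutator (hγ : IsCliffordFamily p γ) (x : Fin n → ℝ) (i : Fin n) :
    ∑ k, pd (fun y => X y i) k x • γ k
        - (cliffordBivector γ (skewDeriv p X x) * γ i - γ i * cliffordBivector γ (skewDeriv p X x))
      = (divg X x / n) • γ i := by
  rw [hγ.cliffordBivector_mul_sub_mul (skewDeriv_swap x)]
  simp only [hX.pd_eq_skewDeriv_add, add_smul, Finset.sum_add_distrib, mul_smul,
    ← Finset.smul_sum, ite_smul, zero_smul, Finset.sum_ite_eq', Finset.mem_univ, if_true,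
    add_sub_cancel_left]

theorem sum_mul_cliffordBivector_pd_skewDeriv (hX2 : ContDiff ℝ 2 X) (hγ : IsCliffordFamily p γ)
    (x : Fin n → ℝ) :
    ∑ k, γ k * cliffordBivector γ (fun i j => pd (fun y => skewDeriv p X y i j) k x)
      + (((n : ℝ) - 1) / (2 * n)) • ∑ k, pd (divg X) k x • γ k = 0 := by
  simp only [hX.pd_skewDeriv hX2, cliffordBivector_const_mul, mul_smul_comm, ← Finset.smul_sum,
    hγ.sum_mul_cliffordBivector, smul_smul, ← add_smul]
  convert zero_smul ℝ _
  ring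

end ConformalKilling

end ConformalKilling

section Kosmann

variable {p n N : ℕ} (γ : Fin n → Matrix (Fin N) (Fin N) ℂ) {X : (Fin n → ℝ) → Fin n → ℝ}
  {ψ : (Fin n → ℝ) → Fin N → ℂ}

theorem cliffordBivector_mulVec (B : Fin n → Fin n → ℝ) (v : Fin N → ℂ) :
    cliffordBivector γ B *ᵥ v = (1 / 4 : ℝ) • ∑ i, ∑ j, B i j • ((γ i * γ j) *ᵥ v) := by
  simp only [cliffordBivector, Matrix.smul_mulVec, Matrix.sum_mulVec]

theorem kosmann_apply (lam : ℝ) (X : (Fin n → ℝ) → Fin n → ℝ) (ψ : (Fin n → ℝ) → Fin N → ℂ)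
    (x : Fin n → ℝ) :
    kosmann p γ lam X ψ x = ∑ i, X x i • pdV ψ i x
      + cliffordBivector γ (skewDeriv p X x) *ᵥ ψ x + (lam * divg X x) • ψ x := by
  rw [cliffordBivector_mulVec]
  rfl

theorem kosmann_add_weight (lam mu : ℝ) (X : (Fin n → ℝ) → Fin n → ℝ)
    (ψ : (Fin n → ℝ) → Fin N → ℂ) (x : Fin n → ℝ) :
    kosmann p γ (lam + mu) X ψ x = kosmann p γ lam X ψ x + (mu * divg X x) • ψ x := by
  simp only [kosmann_apply, add_mul, add_smul, add_assoc]

theorem pdV_cliffordBivector_mulVec {x : Fin n → ℝ} {k : Fin n}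
    {B : (Fin n → ℝ) → Fin n → Fin n → ℝ} (hB : ∀ i j, DifferentiableAt ℝ (fun y => B y i j) x)
    (hψ : DifferentiableAt ℝ ψ x) :
    pdV (fun y => cliffordBivector γ (B y) *ᵥ ψ y) k x
      = cliffordBivector γ (fun i j => pd (fun y => B y i j) k x) *ᵥ ψ x
        + cliffordBivector γ (B x) *ᵥ pdV ψ k x := by
  have hM := fun i j => (hasFDerivAt_mulVec (γ i * γ j) hψ.hasFDerivAt).differentiableAt
  simp only [cliffordBivector_mulVec, ← smul_add, ← Finset.sum_add_distrib]
  rw [pdV_const_smul _ (by fun_prop), pdV_sum _ (fun i _ => by fun_prop)]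
  congr 1
  refine Finset.sum_congr rfl fun i _ => ?_
  rw [pdV_sum _ (fun j _ => (hB i j).fun_smul (hM i j))]
  exact Finset.sum_congr rfl fun j _ => by rw [pdV_smul (hB i j) (hM i j), pdV_mulVec _ hψ]

theorem pdV_kosmann (hX : ContDiff ℝ 2 X) (hψ : ContDiff ℝ 2 ψ) (lam : ℝ) (x : Fin n → ℝ)
    (k : Fin n) :
    pdV (kosmann p γ lam X ψ) k x
      = ∑ i, (pd (fun y => X y i) k x • pdV ψ i x + X x i • pdV (pdV ψ i) k x)
        + (cliffordBivector γ (fun i j => pd (fun y => skewDeriv p X y i j) k x) *ᵥ ψ x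
          + cliffordBivector γ (skewDeriv p X x) *ᵥ pdV ψ k x)
        + ((lam * pd (divg X) k x) • ψ x + (lam * divg X x) • pdV ψ k x) := by
  have hXi i : Differentiable ℝ fun y => X y i :=
    (contDiff_pi.mp hX i).differentiable two_ne_zero
  have hψ₁ : Differentiable ℝ ψ := hψ.differentiable two_ne_zero
  have hψ₂ := differentiable_pdV hψ
  have hA := differentiable_skewDeriv (p := p) hX
  have hφ := differentiable_divg hX
  have hM i j := (hasFDerivAt_mulVec (γ i * γ j) (hψ₁ x).hasFDerivAt).differentiableAt
  have hΩ : DifferentiableAt ℝ (fun y => cliffordBivector γ (skewDeriv p X y) *ᵥ ψ y) x := by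
    simp only [cliffordBivector_mulVec]
    fun_prop
  rw [show kosmann p γ lam X ψ = _ from funext (kosmann_apply γ lam X ψ),
    pdV_add (by fun_prop) (by fun_prop), pdV_add (by fun_prop) hΩ,
    pdV_sum _ (fun i _ => by fun_prop), pdV_cliffordBivector_mulVec γ (fun i j => hA i j x) (hψ₁ x),
    pdV_smul (by fun_prop) (hψ₁ x), pd_const_mul lam (hφ x)]
  congr 2
  exact Finset.sum_congr rfl fun i _ => pdV_smul (hXi i x) (hψ₂ i x)

theorem pdV_dirac (hψ : ContDiff ℝ 2 ψ) (x : Fin n → ℝ) (i : Fin n) :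
    pdV (dirac γ ψ) i x = ∑ k, γ k *ᵥ pdV (pdV ψ i) k x := by
  have hψ₂ k := differentiable_pdV hψ k x
  rw [show dirac γ ψ = fun y => ∑ k, γ k *ᵥ pdV ψ k y from rfl,
    pdV_sum _ fun k _ => (hasFDerivAt_mulVec (γ k) (hψ₂ k).hasFDerivAt).differentiableAt]
  exact Finset.sum_congr rfl fun k _ => by rw [pdV_mulVec _ (hψ₂ k), pdV_comm hψ]

theorem dirac_kosmann (hX : ContDiff ℝ 2 X) (hψ : ContDiff ℝ 2 ψ) (lam : ℝ) (x : Fin n → ℝ) :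
    dirac γ (kosmann p γ lam X ψ) x = kosmann p γ lam X (dirac γ ψ) x
      + ∑ i, (∑ k, pd (fun y => X y i) k x • γ k
          - (cliffordBivector γ (skewDeriv p X x) * γ i
            - γ i * cliffordBivector γ (skewDeriv p X x))) *ᵥ pdV ψ i x
      + (∑ k, γ k * cliffordBivector γ (fun i j => pd (fun y => skewDeriv p X y i j) k x)
          + lam • ∑ k, pd (divg X) k x • γ k) *ᵥ ψ x := by
  rw [kosmann_apply, show dirac γ (kosmann p γ lam X ψ) x
    = ∑ k, γ k *ᵥ pdV (kosmann p γ lam X ψ) k x from rfl,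
    show dirac γ ψ x = ∑ k, γ k *ᵥ pdV ψ k x from rfl]
  simp only [pdV_kosmann γ hX hψ, pdV_dirac γ hψ, Matrix.mulVec_add, Matrix.mulVec_sum,
    Matrix.mulVec_smul, Matrix.mulVec_mulVec, Matrix.add_mulVec, Matrix.sub_mulVec,
    Matrix.sum_mulVec, Matrix.smul_mulVec, Finset.sum_add_distrib, Finset.sum_sub_distrib,
    Finset.smul_sum, mul_smul]
  rw [Finset.sum_comm (f := fun k i => pd (fun y => X y i) k x • γ k *ᵥ pdV ψ i x),
    Finset.sum_comm (f := fun k i => X x i • γ k *ᵥ pdV (pdV ψ i) k x)]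
  abel

end Kosmann

theorem dirac_conformally_invariant_general (p q N : ℕ)
    (γ : Fin (p + q) → Matrix (Fin N) (Fin N) ℂ)
    (hγ : ∀ i j, γ i * γ j + γ j * γ i
      = (2 * (etaUp p i j : ℝ) : ℂ) • (1 : Matrix (Fin N) (Fin N) ℂ))
    (X : (Fin (p + q) → ℝ) → Fin (p + q) → ℝ)
    (hXs : ContDiff ℝ (⊤ : ℕ∞) X) (hX : ConformalKilling p X)
    (ψ : (Fin (p + q) → ℝ) → Fin N → ℂ) (hψ : ContDiff ℝ (⊤ : ℕ∞) ψ) :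
    ∀ x, dirac γ (kosmann p γ (((p + q : ℝ) - 1) / (2 * (p + q : ℝ))) X ψ) x
      = kosmann p γ (((p + q : ℝ) + 1) / (2 * (p + q : ℝ))) X (dirac γ ψ) x := by
  intro x
  have hClifford : IsCliffordFamily p γ := fun i j => by
    rw [hγ, ← Complex.ofReal_ofNat, ← Complex.ofReal_mul]
    exact algebraMap_smul ℂ (2 * etaUp p i j) (1 : Matrix (Fin N) (Fin N) ℂ)
  have hX₂ : ContDiff ℝ 2 X := hXs.of_le (WithTop.coe_le_coe.mpr le_top)
  have hψ₂ : ContDiff ℝ 2 ψ := hψ.of_le (WithTop.coe_le_coe.mpr le_top)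
  simp only [← Nat.cast_add]
  rw [dirac_kosmann γ hX₂ hψ₂, hX.sum_mul_cliffordBivector_pd_skewDeriv hX₂ hClifford x,
    Matrix.zero_mulVec, add_zero,
    show (((p + q : ℕ) : ℝ) + 1) / (2 * (p + q : ℕ))
      = (((p + q : ℕ) : ℝ) - 1) / (2 * (p + q : ℕ)) + 1 / (p + q : ℕ) by ring,
    kosmann_add_weight]
  simp only [hX.sum_pd_smul_sub_commutator hClifford x, Matrix.smul_mulVec, ← Finset.smul_sum]
  congr 2
  ring

/-- For `n = p + q ≥ 3` and Clifford matrices `γⁱ` for the flat metric of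
signature `(p,q)`, the flat Dirac operator `D = Σᵢ γⁱ∂ᵢ` is conformally invariant from
spinor fields of weight `(n−1)/(2n)` to spinor fields of weight `(n+1)/(2n)`:
`D(L^{(n−1)/(2n)}_X ψ) = L^{(n+1)/(2n)}_X (Dψ)` for every conformal Killing field `X`. -/
theorem dirac_conformally_invariant (p q N : ℕ) (hn : 3 ≤ p + q)
    (γ : Fin (p + q) → Matrix (Fin N) (Fin N) ℂ)
    (hγ : ∀ i j, γ i * γ j + γ j * γ i
      = (2 * (etaUp p i j : ℝ) : ℂ) • (1 : Matrix (Fin N) (Fin N) ℂ))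
    (X : (Fin (p + q) → ℝ) → Fin (p + q) → ℝ)
    (hXs : ContDiff ℝ (⊤ : ℕ∞) X) (hX : ConformalKilling p X)
    (ψ : (Fin (p + q) → ℝ) → Fin N → ℂ) (hψ : ContDiff ℝ (⊤ : ℕ∞) ψ) :
    ∀ x, dirac γ (kosmann p γ (((p + q : ℝ) - 1) / (2 * (p + q : ℝ))) X ψ) x
      = kosmann p γ (((p + q : ℝ) + 1) / (2 * (p + q : ℝ))) X (dirac γ ψ) x :=
  dirac_conformally_invariant_general p q N γ hγ X hXs hX ψ hψ
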